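/- Let t ≥ 1 be an integer and let G be a finite simple graph on n vertices with C(t+1,2) + 3 ≤ n ≤ C(t+2,2) + 2, where C(m,2) = m(m−1)/2. Then f(G) ≤ t. -/
import Mathlib


open Finset

variable {V : Type*}

open scoped Classical in
/-- Degree of `v` in the subgraph of `G` induced on the vertex set `A`
(number of neighbours of `v` inside `A`). -/
noncomputable def degOn (G : SimpleGraph V) (A : Finset V) (v : V) : ℕ :=
  (A.filter fun w => G.Adj v w).card

/-- Maximum degree of the subgraph of `G` induced on `A`. -/
noncomputable def maxDegOn (G : SimpleGraph V) (A : Finset V) : ℕ :=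
  A.sup (degOn G A)

open scoped Classical in
/-- The subgraph of `G` induced on `A` has fewer than `k` vertices or at least `k`
vertices realising its maximum degree. -/
def equates (G : SimpleGraph V) (k : ℕ) (A : Finset V) : Prop :=
  A.card < k ∨ k ≤ (A.filter fun v => degOn G A v = maxDegOn G A).card

open scoped Classical in
/-- `f_k` of the subgraph of `G` induced on `A`: the minimum number of vertices of `A`
whose deletion leaves an induced subgraph with fewer than `k` vertices or with at
least `k` vertices realising its maximum degree. -/
noncomputable def fkOn (G : SimpleGraph V) (k : ℕ) (A : Finset V) : ℕ :=
  sInf {m | ∃ S, S ⊆ A ∧ S.card = m ∧ equates G k (A \ S)}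

/-- `f_k(G)`. -/
noncomputable def fk [Fintype V] (G : SimpleGraph V) (k : ℕ) : ℕ :=
  fkOn G k Finset.univ

/-- `diff` of the subgraph of `G` induced on `A`: the largest degree minus the
second-largest degree (with multiplicity) of this subgraph. -/
noncomputable def diffOn (G : SimpleGraph V) (A : Finset V) : ℕ :=
  maxDegOn G A - ((A.val.map (degOn G A)).erase (maxDegOn G A)).sup

/-- `diff(G) = d₁ - d₂`, the difference between the largest and second-largest
vertex degrees of `G`. -/
noncomputable def diffDeg [Fintype V] (G : SimpleGraph V) : ℕ :=
  diffOn G Finset.univ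

section Aux

open scoped Classical

variable {G : SimpleGraph V} {A : Finset V} {v u w : V}

lemma degOn_mono {A B : Finset V} (h : A ⊆ B) (v : V) :
    degOn G A v ≤ degOn G B v := by
  classical
  unfold degOn
  exact card_le_card (filter_subset_filter _ h)

lemma degOn_le_maxDegOn (hv : v ∈ A) : degOn G A v ≤ maxDegOn G A := by
  unfold maxDegOn; exact Finset.le_sup hv

lemma maxDegOn_le {m : ℕ} (h : ∀ x ∈ A, degOn G A x ≤ m) : maxDegOn G A ≤ m := by
  unfold maxDegOn; exact Finset.sup_le h

lemma exists_degOn_eq_maxDegOn (h : A.Nonempty) :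
    ∃ v ∈ A, degOn G A v = maxDegOn G A := by
  obtain ⟨v, hv, hv2⟩ := Finset.exists_mem_eq_sup A h (degOn G A)
  exact ⟨v, hv, hv2.symm⟩

lemma degOn_erase_of_not_adj (h : ¬ G.Adj v w) :
    degOn G (A.erase w) v = degOn G A v := by
  classical
  unfold degOn
  congr 1
  ext x
  simp only [mem_filter, mem_erase]
  refine ⟨fun hx => ⟨hx.1.2, hx.2⟩, fun hx => ⟨⟨?_, hx.1⟩, hx.2⟩⟩
  rintro rfl; exact h hx.2

lemma degOn_erase_of_adj (hw : w ∈ A) (h : G.Adj v w) :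
    degOn G (A.erase w) v + 1 = degOn G A v := by
  classical
  unfold degOn
  have he : (A.erase w).filter (fun x => G.Adj v x) = (A.filter (fun x => G.Adj v x)).erase w := by
    ext x
    simp only [mem_filter, mem_erase]
    tauto
  rw [he, card_erase_of_mem (mem_filter.mpr ⟨hw, h⟩)]
  exact Nat.sub_add_cancel (Nat.one_le_iff_ne_zero.mpr (Finset.card_ne_zero_of_mem (mem_filter.mpr ⟨hw, h⟩)))

lemma fkOn_eq_zero (h : equates G 2 A) : fkOn G 2 A = 0 := by
  have h0 : (0:ℕ) ∈ {m | ∃ S, S ⊆ A ∧ S.card = m ∧ equates G 2 (A \ S)} :=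
    ⟨∅, empty_subset _, card_empty, by rwa [sdiff_empty]⟩
  exact Nat.eq_zero_of_le_zero (Nat.sInf_le h0)

lemma fkOn_le_erase_add_one (hv : v ∈ A) :
    fkOn G 2 A ≤ fkOn G 2 (A.erase v) + 1 := by
  classical
  have hmem : fkOn G 2 (A.erase v) ∈
      {m | ∃ S, S ⊆ A.erase v ∧ S.card = m ∧ equates G 2 (A.erase v \ S)} := by
    apply Nat.sInf_mem
    exact ⟨(A.erase v).card, A.erase v, Finset.Subset.rfl, rfl, Or.inl (by simp)⟩
  obtain ⟨S, hS, hcard, heq⟩ := hmem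
  apply Nat.sInf_le
  refine ⟨insert v S, ?_, ?_, ?_⟩
  · exact insert_subset hv (hS.trans (erase_subset _ _))
  · rw [card_insert_of_notMem (fun hvS => (mem_erase.mp (hS hvS)).1 rfl), hcard]
  · have hset : A \ insert v S = A.erase v \ S := by
      ext x
      simp only [mem_sdiff, mem_erase, mem_insert, not_or]
      tauto
    rwa [hset]

lemma not_equates_struct (h : ¬ equates G 2 A) :
    ∃ v ∈ A, degOn G A v = maxDegOn G A ∧
      (∀ x ∈ A, degOn G A x = maxDegOn G A → x = v) ∧ 2 ≤ A.card := by
  classical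
  simp only [equates, not_or, not_lt, not_le] at h
  obtain ⟨hA2, hclass⟩ := h
  have hAne : A.Nonempty := card_pos.mp (by omega)
  obtain ⟨v, hv, hvmax⟩ := exists_degOn_eq_maxDegOn hAne
  refine ⟨v, hv, hvmax, ?_, hA2⟩
  intro x hx hxm
  by_contra hne
  have hsub : ({x, v} : Finset V) ⊆ A.filter (fun y => degOn G A y = maxDegOn G A) := by
    intro y hy
    rcases mem_insert.mp hy with rfl | hy
    · exact mem_filter.mpr ⟨hx, hxm⟩
    · rw [mem_singleton.mp hy]; exact mem_filter.mpr ⟨hv, hvmax⟩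
  have hc := card_le_card hsub
  rw [card_pair hne] at hc
  omega

lemma two_le_max_of_not_equates (h : ¬ equates G 2 A) : 2 ≤ maxDegOn G A := by
  classical
  obtain ⟨v, hv, hvmax, huniq, hA2⟩ := not_equates_struct h
  by_contra hlt
  push_neg at hlt
  have hcase : maxDegOn G A = 0 ∨ maxDegOn G A = 1 := by omega
  rcases hcase with h0 | h1
  · obtain ⟨x, hx, hxv⟩ := Finset.exists_mem_ne (by omega : 1 < A.card) v
    have hxm : degOn G A x = maxDegOn G A := by
      have := degOn_le_maxDegOn (G := G) hx; omega
    exact hxv (huniq x hx hxm)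
  · have hdv : degOn G A v = 1 := by rw [hvmax, h1]
    unfold degOn at hdv
    have hne : (A.filter fun w => G.Adj v w).Nonempty := card_pos.mp (by omega)
    obtain ⟨w, hw⟩ := hne
    obtain ⟨hwA, hvw⟩ := mem_filter.mp hw
    have h1w : 1 ≤ degOn G A w := by
      unfold degOn
      exact card_pos.mpr ⟨v, mem_filter.mpr ⟨hv, hvw.symm⟩⟩
    have hwm : degOn G A w = maxDegOn G A := by
      have := degOn_le_maxDegOn (G := G) hwA; omega
    exact hvw.ne' (huniq w hwA hwm)

end Aux

section Key

open scoped Classical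

variable {G : SimpleGraph V}

/-- If `v` realises the maximum degree on `A` and some other vertex `u` has degree
within `b` of the maximum, then `fkOn G 2 A ≤ b`. -/
lemma keyA (G : SimpleGraph V) : ∀ (b : ℕ) (A : Finset V) (v u : V), v ∈ A → u ∈ A → u ≠ v →
    degOn G A v = maxDegOn G A → maxDegOn G A ≤ degOn G A u + b → fkOn G 2 A ≤ b := by
  classical
  intro b
  induction b with
  | zero =>
    intro A v u hv hu huv hvmax hle
    have hu' : degOn G A u = maxDegOn G A :=
      le_antisymm (degOn_le_maxDegOn (G := G) hu) (by omega)
    have h2 : equates G 2 A := by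
      right
      have hsub : ({u, v} : Finset V) ⊆ A.filter (fun x => degOn G A x = maxDegOn G A) := by
        intro x hx
        rcases mem_insert.mp hx with rfl | hx
        · exact mem_filter.mpr ⟨hu, hu'⟩
        · rw [mem_singleton.mp hx]; exact mem_filter.mpr ⟨hv, hvmax⟩
      have := card_le_card hsub
      rwa [card_pair huv] at this
    simp [fkOn_eq_zero h2]
  | succ b ih =>
    intro A v u hv hu huv hvmax hle
    by_cases heq : equates G 2 A
    · simp [fkOn_eq_zero heq]
    obtain ⟨v', hv', hv'max, huniq, hA2⟩ := not_equates_struct heq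
    have hvv' : v = v' := huniq v hv hvmax
    subst hvv'
    have hune : degOn G A u < maxDegOn G A :=
      lt_of_le_of_ne (degOn_le_maxDegOn (G := G) hu) (fun h => huv (huniq u hu h))
    -- find a neighbour `w` of `v` avoiding `u` and its neighbourhood
    have hex : ∃ w ∈ A, G.Adj v w ∧ ¬ G.Adj u w ∧ w ≠ u := by
      by_contra hcon
      push_neg at hcon
      -- every neighbour of v in A is u or a neighbour of u
      have hsub : (A.filter fun x => G.Adj v x).erase u ⊆
          (A.filter fun x => G.Adj u x).erase v := by
        intro x hx
        obtain ⟨hxu, hxA⟩ := mem_erase.mp hx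
        obtain ⟨hxA', hvx⟩ := mem_filter.mp hxA
        have hux : G.Adj u x := by
          by_contra hnot
          exact hxu (hcon x hxA' hvx hnot)
        exact mem_erase.mpr ⟨hvx.ne', mem_filter.mpr ⟨hxA', hux⟩⟩
      have hcard := card_le_card hsub
      have hdegv : degOn G A v = (A.filter fun x => G.Adj v x).card := rfl
      have hdegu : degOn G A u = (A.filter fun x => G.Adj u x).card := rfl
      by_cases huNv : u ∈ (A.filter fun x => G.Adj v x)
      · -- u is a neighbour of v, hence v is a neighbour of u
        have hvNu : v ∈ (A.filter fun x => G.Adj u x) :=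
          mem_filter.mpr ⟨hv, (mem_filter.mp huNv).2.symm⟩
        rw [card_erase_of_mem huNv, card_erase_of_mem hvNu] at hcard
        have hX : 0 < (A.filter fun x => G.Adj v x).card := card_pos.mpr ⟨u, huNv⟩
        have hY : 0 < (A.filter fun x => G.Adj u x).card := card_pos.mpr ⟨v, hvNu⟩
        omega
      · rw [Finset.erase_eq_of_notMem huNv] at hcard
        have := card_erase_le (s := (A.filter fun x => G.Adj u x)) (a := v)
        omega
    obtain ⟨w, hwA, hvw, huw, hwu⟩ := hex
    have hvA' : v ∈ A.erase w := mem_erase.mpr ⟨hvw.ne, hv⟩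
    have huA' : u ∈ A.erase w := mem_erase.mpr ⟨hwu.symm, hu⟩
    have hdv' : degOn G (A.erase w) v + 1 = degOn G A v := degOn_erase_of_adj hwA hvw
    have hdu' : degOn G (A.erase w) u = degOn G A u := degOn_erase_of_not_adj huw
    have hmax' : degOn G (A.erase w) v = maxDegOn G (A.erase w) := by
      refine le_antisymm (degOn_le_maxDegOn (G := G) hvA') (maxDegOn_le ?_)
      intro x hx
      obtain ⟨hxw, hxA⟩ := mem_erase.mp hx
      by_cases hxv : x = v
      · subst hxv; exact le_rfl
      · have h1 : degOn G (A.erase w) x ≤ degOn G A x := degOn_mono (erase_subset _ _) x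
        have h2 : degOn G A x < maxDegOn G A :=
          lt_of_le_of_ne (degOn_le_maxDegOn (G := G) hxA) (fun h => hxv (huniq x hxA h))
        omega
    have hle' : maxDegOn G (A.erase w) ≤ degOn G (A.erase w) u + b := by
      have := degOn_le_maxDegOn (G := G) hvA'
      omega
    have hrec := ih (A.erase w) v u hvA' huA' huv hmax' hle'
    calc fkOn G 2 A ≤ fkOn G 2 (A.erase w) + 1 := fkOn_le_erase_add_one (G := G) hwA
      _ ≤ b + 1 := Nat.add_le_add_right hrec 1

/-- Budget lemma: small maximum degree forces small `fkOn`. -/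
lemma keyC (G : SimpleGraph V) : ∀ (b : ℕ) (A : Finset V),
    maxDegOn G A ≤ Nat.choose (b + 2) 2 → fkOn G 2 A ≤ b := by
  classical
  intro b
  induction b with
  | zero =>
    intro A hbound
    by_cases heq : equates G 2 A
    · simp [fkOn_eq_zero heq]
    · exact absurd hbound (by have := two_le_max_of_not_equates heq; simp [Nat.choose]; omega)
  | succ b ih =>
    intro A hbound
    by_cases heq : equates G 2 A
    · simp [fkOn_eq_zero heq]
    obtain ⟨v, hv, hvmax, huniq, hA2⟩ := not_equates_struct heq
    have hΔ2 : 2 ≤ maxDegOn G A := two_le_max_of_not_equates heq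
    have hne' : (A.erase v).Nonempty := by
      obtain ⟨x, hx, hxv⟩ := Finset.exists_mem_ne (by omega : 1 < A.card) v
      exact ⟨x, mem_erase.mpr ⟨hxv, hx⟩⟩
    obtain ⟨u, hu', hu2⟩ := Finset.exists_mem_eq_sup (A.erase v) hne' (degOn G A)
    have hu : u ∈ A := (mem_erase.mp hu').2
    have huv : u ≠ v := (mem_erase.mp hu').1
    have hsec : ∀ x ∈ A, x ≠ v → degOn G A x ≤ (A.erase v).sup (degOn G A) :=
      fun x hx hxv => Finset.le_sup (mem_erase.mpr ⟨hxv, hx⟩)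
    by_cases hcase : maxDegOn G A ≤ degOn G A u + (b + 1)
    · exact keyA G (b + 1) A v u hv hu huv hvmax hcase
    · push_neg at hcase
      have hch : Nat.choose (b + 1 + 2) 2 = Nat.choose (b + 2) 2 + (b + 2) := by
        rw [show b + 1 + 2 = (b + 2) + 1 from rfl, Nat.choose_succ_succ (b + 2) 1,
          Nat.choose_one_right, show Nat.succ 1 = 2 from rfl]
        omega
      have hA'bound : maxDegOn G (A.erase v) ≤ Nat.choose (b + 2) 2 := by
        apply maxDegOn_le
        intro x hx
        obtain ⟨hxv, hxA⟩ := mem_erase.mp hx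
        have h1 : degOn G (A.erase v) x ≤ degOn G A x := degOn_mono (erase_subset _ _) x
        have h2 := hsec x hxA hxv
        omega
      have hrec := ih (A.erase v) hA'bound
      calc fkOn G 2 A ≤ fkOn G 2 (A.erase v) + 1 := fkOn_le_erase_add_one (G := G) hv
        _ ≤ b + 1 := Nat.add_le_add_right hrec 1

end Key

/-- If `t ≥ 1` and `G` is a graph on `n` vertices with
`C(t+1,2) + 3 ≤ n ≤ C(t+2,2) + 2`, then `f(G) ≤ t`. -/
theorem stmt7 {V : Type*} [Fintype V] (G : SimpleGraph V) (t : ℕ) (ht : 1 ≤ t)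
    (hlo : Nat.choose (t + 1) 2 + 3 ≤ Fintype.card V)
    (hhi : Fintype.card V ≤ Nat.choose (t + 2) 2 + 2) :
    fk G 2 ≤ t := by
  classical
  show fkOn G 2 (univ : Finset V) ≤ t
  have h4 : 4 ≤ Fintype.card V := by
    have h22 : Nat.choose 2 2 = 1 := rfl
    have hm := Nat.choose_le_choose 2 (show 2 ≤ t + 1 by omega)
    omega
  have hdeg : ∀ v : V, degOn G (univ : Finset V) v + 1 ≤ Fintype.card V := by
    intro v
    have hsub : ((univ : Finset V).filter fun w => G.Adj v w) ⊆ univ.erase v := by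
      intro x hx
      exact mem_erase.mpr ⟨(mem_filter.mp hx).2.ne', mem_univ x⟩
    have hc := card_le_card hsub
    rw [card_erase_of_mem (mem_univ v), card_univ] at hc
    have hrfl : degOn G (univ : Finset V) v
        = ((univ : Finset V).filter fun w => G.Adj v w).card := rfl
    omega
  have hmax1 : maxDegOn G (univ : Finset V) + 1 ≤ Fintype.card V := by
    have := maxDegOn_le (G := G) (A := (univ : Finset V)) (m := Fintype.card V - 1)
      (fun x _ => by have := hdeg x; omega)
    omega
  by_cases hc : maxDegOn G (univ : Finset V) ≤ Nat.choose (t + 2) 2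
  · exact keyC G t univ hc
  push_neg at hc
  have hΔeq : maxDegOn G (univ : Finset V) = Nat.choose (t + 2) 2 + 1 := by omega
  by_cases heq : equates G 2 (univ : Finset V)
  · rw [fkOn_eq_zero heq]; exact Nat.zero_le t
  obtain ⟨v, hv, hvmax, huniq, hA2⟩ := not_equates_struct heq
  have hdegv : degOn G (univ : Finset V) v + 1 = Fintype.card V := by omega
  have hadj : ∀ x : V, x ≠ v → G.Adj v x := by
    intro x hxv
    by_contra hnadj
    have hsub : ((univ : Finset V).filter fun w => G.Adj v w) ⊆ (univ.erase v).erase x := by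
      intro y hy
      have hy' := mem_filter.mp hy
      refine mem_erase.mpr ⟨fun h => ?_, mem_erase.mpr ⟨hy'.2.ne', mem_univ y⟩⟩
      exact hnadj (h ▸ hy'.2)
    have hcc := card_le_card hsub
    rw [card_erase_of_mem (mem_erase.mpr ⟨hxv, mem_univ x⟩),
      card_erase_of_mem (mem_univ v), card_univ] at hcc
    have hrfl : degOn G (univ : Finset V) v
        = ((univ : Finset V).filter fun w => G.Adj v w).card := rfl
    omega
  have hne' : ((univ : Finset V).erase v).Nonempty := by
    obtain ⟨x, hx, hxv⟩ := Finset.exists_mem_ne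
      (show 1 < (univ : Finset V).card by rw [card_univ]; omega) v
    exact ⟨x, mem_erase.mpr ⟨hxv, hx⟩⟩
  obtain ⟨u, hu', hu2⟩ := Finset.exists_mem_eq_sup ((univ : Finset V).erase v) hne'
    (degOn G (univ : Finset V))
  have huv : u ≠ v := (mem_erase.mp hu').1
  have hsec : ∀ x : V, x ≠ v → degOn G (univ : Finset V) x
      ≤ ((univ : Finset V).erase v).sup (degOn G (univ : Finset V)) :=
    fun x hxv => Finset.le_sup (mem_erase.mpr ⟨hxv, mem_univ x⟩)
  by_cases hcase : maxDegOn G (univ : Finset V) ≤ degOn G (univ : Finset V) u + t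
  · exact keyA G t univ v u hv (mem_univ u) huv hvmax hcase
  push_neg at hcase
  obtain ⟨s, rfl⟩ : ∃ s, t = s + 1 := ⟨t - 1, by omega⟩
  have hch : Nat.choose (s + 1 + 2) 2 = Nat.choose (s + 2) 2 + (s + 2) := by
    rw [show s + 1 + 2 = (s + 2) + 1 from rfl, Nat.choose_succ_succ (s + 2) 1,
      Nat.choose_one_right, show Nat.succ 1 = 2 from rfl]
    omega
  have hA'bound : maxDegOn G ((univ : Finset V).erase v) ≤ Nat.choose (s + 2) 2 := by
    apply maxDegOn_le
    intro x hx
    have h1 : degOn G ((univ : Finset V).erase v) x + 1 = degOn G (univ : Finset V) x :=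
      degOn_erase_of_adj (mem_univ v) ((hadj x (mem_erase.mp hx).1).symm)
    have h2 := hsec x (mem_erase.mp hx).1
    omega
  have hrec := keyC G s ((univ : Finset V).erase v) hA'bound
  calc fkOn G 2 (univ : Finset V) ≤ fkOn G 2 ((univ : Finset V).erase v) + 1 :=
        fkOn_le_erase_add_one (G := G) hv
    _ ≤ s + 1 := Nat.add_le_add_right hrec 1
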